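/- Under the assumption ε₀² − ε₃² = (m')² − κ₀² together with (ε₀, ε₃, κ₀, m') ≠ (0,0,0,0) viewed over ℝ with ε₀ + m' ≠ 0 or ε₃ − κ₀ ≠ 0, the 4×4 matrix M = !![ε₀−m', 0, −ε₃−κ₀, 0; 0, ε₀−m', 0, ε₃+κ₀; ε₃−κ₀, 0, −ε₀−m', 0; 0, −ε₃+κ₀, 0, −ε₀−m'] has rank exactly 2. -/

import Mathlib

/-!
With `s = ε₀ + m'` and `c = ε₃ - κ₀`, the mass-shell relation says that the two interleaved
`2 × 2` blocks of `M` (on the coordinates `{0, 2}` and `{1, 3}`) are singular, with kernels spanned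
by `(-s, -c)` and `(s, -c)`; these give a `4 × 2` matrix `N` with `M * N = 0`. Since
`s ^ 2 + c ^ 2 ≠ 0`, both `N` and the last two rows of `M` become `(s ^ 2 + c ^ 2) • 1` after
multiplication by suitable matrices, so both have rank at least `2`, while
`rank M + rank N ≤ 4`.
-/

open Matrix

theorem Matrix.card_le_rank_of_mul_mul_eq_smul_one {K l m n : Type*} [Field K] [Fintype l]
    [DecidableEq l] [Fintype m] [Fintype n] {A : Matrix m n K} (P : Matrix l m K)
    (Q : Matrix n l K) {c : K} (hc : c ≠ 0) (h : P * A * Q = c • 1) :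
    Fintype.card l ≤ A.rank :=
  calc Fintype.card l = (P * A * Q).rank := by
        rw [h, rank_of_isUnit (c • 1 : Matrix l l K) (isUnit_one.smul (Units.mk0 c hc))]
    _ ≤ (P * A).rank := rank_mul_le_left _ _
    _ ≤ A.rank := rank_mul_le_right _ _

theorem dirac_matrix_rank_two (ε₀ ε₃ κ₀ m' : ℝ)
    (hshell : ε₀ ^ 2 - ε₃ ^ 2 = m' ^ 2 - κ₀ ^ 2)
    (hne : ε₀ + m' ≠ 0 ∨ ε₃ - κ₀ ≠ 0) :
    (!![ε₀ - m', 0, -ε₃ - κ₀, 0;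
        0, ε₀ - m', 0, ε₃ + κ₀;
        ε₃ - κ₀, 0, -ε₀ - m', 0;
        0, -ε₃ + κ₀, 0, -ε₀ - m'] : Matrix (Fin 4) (Fin 4) ℝ).rank = 2 := by
  set M : Matrix (Fin 4) (Fin 4) ℝ := !![ε₀ - m', 0, -ε₃ - κ₀, 0;
        0, ε₀ - m', 0, ε₃ + κ₀;
        ε₃ - κ₀, 0, -ε₀ - m', 0;
        0, -ε₃ + κ₀, 0, -ε₀ - m']
  set s := ε₀ + m'
  set c := ε₃ - κ₀
  have hd : s ^ 2 + c ^ 2 ≠ 0 := by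
    rcases hne with h | h <;> positivity
  set N : Matrix (Fin 4) (Fin 2) ℝ := !![-s, 0; 0, s; -c, 0; 0, -c]
  have hMN : M * N = 0 := by
    ext i j
    fin_cases i <;> fin_cases j <;> simp [M, N, s, c, mul_apply, Fin.sum_univ_four] <;>
      linarith
  have hN : 2 ≤ N.rank := by
    simpa using card_le_rank_of_mul_mul_eq_smul_one Nᵀ 1 hd (by
      ext i j
      fin_cases i <;> fin_cases j <;> simp [N, mul_apply, Fin.sum_univ_four] <;> ring)
  have hM : 2 ≤ M.rank := by
    simpa using card_le_rank_of_mul_mul_eq_smul_one !![0, 0, 1, 0; 0, 0, 0, 1]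
      !![c, 0; 0, -c; -s, 0; 0, -s] hd (by
      ext i j
      fin_cases i <;> fin_cases j <;> simp [M, s, c, mul_apply, Fin.sum_univ_four] <;> ring)
  have hsum : M.rank + N.rank ≤ 4 := by
    simpa using rank_add_rank_le_card_of_mul_eq_zero hMN
  omega
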